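/- Let K be a commutative ring with two commuting ring endomorphisms φ and σ such that (K, φ) is a φ-pseudo field, and let R be a σ-PV ring over K for an equation φ(y) = A y, A ∈ GL_n(K) (i.e., R is a K-algebra with commuting endomorphisms Φ and Σ extending φ and σ, Φ-simple, a Φ-pseudo domain, generated as a K-algebra by the entries of Σ^i(Y) and the inverses (det Σ^i(Y))^{-1} for all i ≥ 0 for a fundamental solution matrix Y ∈ GL_n(R) with Φ(Y) = (algebraMap A)·Y). Assume R^Φ equals the image of k := K^φ (a field) under the algebra map. Consider the ring C := R ⊗_K R with the endomorphism Φ ⊗ Φ, and let H := C^{Φ⊗Φ} be its subring of (Φ ⊗ Φ)-constants; H contains the image of k (via c ↦ c ⊗ 1 = 1 ⊗ c) and is thereby a k-algebra. Then the ring homomorphism μ : R ⊗_k H → R ⊗_K R determined by μ(r ⊗ h) = (r ⊗ 1) · h is bijective. -/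

import Mathlib

open scoped TensorProduct

/-- A `φ`-ring `R` is `φ`-simple if the zero ideal and the whole ring are its only
`φ`-ideals (ideals `I` with `φ(I) ⊆ I`). -/
def DiffSimple {R : Type*} [CommRing R] (φ : R →+* R) : Prop :=
  (⊥ : Ideal R) ≠ ⊤ ∧ ∀ I : Ideal R, (∀ x ∈ I, φ x ∈ I) → I = ⊥ ∨ I = ⊤

/-- An ideal `p` of a ring with endomorphism `σ` is `σ`-pseudo prime if
`p = q ∩ σ⁻¹(q) ∩ … ∩ σ^{-(d-1)}(q)` for some `d ≥ 1` and some `σ^d`-prime ideal `q`. -/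
def PseudoPrime {R : Type*} [CommRing R] (σ : R →+* R) (p : Ideal R) : Prop :=
  ∃ d : ℕ, 1 ≤ d ∧ ∃ q : Ideal R, q.IsPrime ∧ Ideal.comap (σ ^ d) q = q ∧
    p = ⨅ i ∈ Finset.range d, Ideal.comap (σ ^ i) q

/-- A ring with endomorphism `φ` is a `φ`-pseudo domain if its zero ideal is
`φ`-pseudo prime. -/
def PseudoDomain {R : Type*} [CommRing R] (φ : R →+* R) : Prop :=
  PseudoPrime φ (⊥ : Ideal R)

/-- A `φ`-pseudo field is a `φ`-simple Noetherian `φ`-ring in which every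
non-zero-divisor is a unit. -/
def PseudoField (R : Type*) [CommRing R] (φ : R →+* R) : Prop :=
  DiffSimple φ ∧ IsNoetherianRing R ∧ ∀ x ∈ nonZeroDivisors R, IsUnit x

/-- The subring of `φ`-constants of a ring with endomorphism `φ`. -/
def constSubring {R : Type*} [CommRing R] (φ : R →+* R) : Subring R :=
  RingHom.eqLocus φ (RingHom.id R)

/-- The canonical map from `k = K^φ` to `H = (R ⊗_K R)^{Φ ⊗ Φ}`, sending `c` to
`c ⊗ 1 = 1 ⊗ c`. -/
noncomputable def kToH {K R : Type*} [CommRing K] [CommRing R] [Algebra K R]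
    (φ : K →+* K) (Φ : R →+* R)
    (hΦ : ∀ a : K, Φ (algebraMap K R a) = algebraMap K R (φ a))
    (ΦC : (R ⊗[K] R) →+* (R ⊗[K] R))
    (hΦC : ∀ r s : R, ΦC (r ⊗ₜ[K] s) = Φ r ⊗ₜ[K] Φ s) :
    ↥(constSubring φ) →+* ↥(constSubring ΦC) where
  toFun a := ⟨(algebraMap K R ↑a) ⊗ₜ[K] (1 : R), by
    have ha : φ ↑a = ↑a := a.2
    show ΦC ((algebraMap K R ↑a) ⊗ₜ[K] (1 : R)) = (algebraMap K R ↑a) ⊗ₜ[K] (1 : R)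
    rw [hΦC, map_one, hΦ, ha]⟩
  map_one' := by ext; simp [Algebra.TensorProduct.one_def]
  map_mul' a b := by ext; simp [Algebra.TensorProduct.tmul_mul_tmul]
  map_zero' := by ext; simp
  map_add' a b := by ext; simp [TensorProduct.add_tmul, map_add]

/-!
Write `k = K^φ` and `H = (R ⊗_K R)^{Φ ⊗ Φ}`; `k` is a field because `K` is `φ`-simple.

Surjectivity: for every `i`, both `Yᵢ ⊗ 1` and `1 ⊗ Yᵢ` (where `Yᵢ = σ'^i(Y)`) solve the same
equation `Φ(X) = σ^i(A) X` in `R ⊗_K R`, so `Z = (Yᵢ ⊗ 1)⁻¹ (1 ⊗ Yᵢ)` has `Φ ⊗ Φ`-constant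
entries. Hence `1 ⊗ Yᵢ = (Yᵢ ⊗ 1) Z` and `1 ⊗ det(Yᵢ)⁻¹` lie in the subring generated by `R ⊗ 1`
and `H`; as these entries and inverse determinants generate `R` over `K`, that subring is all of
`R ⊗_K R`.

Injectivity: a `k`-basis of `H` stays linearly independent over `R`. The coefficients at a fixed
index of the relations on a fixed support form a `Φ`-ideal, hence by `Φ`-simplicity a relation
can be normalized to have coefficient `1` there; applying `Φ ⊗ Φ` and subtracting gives a relation
on a smaller support, so all coefficients are `Φ`-constants, i.e. lie in `k`, where the basis
is independent.
-/

theorem map_eq_self_of_mul_eq_one {S : Type*} [CommRing S] {f : S →+* S} {x y : S}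
    (hx : f x = x) (hxy : x * y = 1) : f y = y :=
  (left_inv_eq_right_inv (by rw [mul_comm, hxy]) (by rw [← hx, ← map_mul, hxy, map_one])).symm

theorem DiffSimple.nontrivial {R : Type*} [CommRing R] {φ : R →+* R} (h : DiffSimple φ) :
    Nontrivial R :=
  (Submodule.nontrivial_iff R).mp (nontrivial_of_ne _ _ h.1)

theorem isField_constSubring {K : Type*} [CommRing K] {φ : K →+* K} (hφ : DiffSimple φ) :
    IsField (constSubring φ) := by
  have := hφ.nontrivial
  refine ⟨⟨0, 1, fun h => zero_ne_one (congrArg Subtype.val h)⟩, mul_comm, fun {a} ha => ?_⟩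
  have hstable : ∀ x ∈ Ideal.span {(a : K)}, φ x ∈ Ideal.span {(a : K)} := by
    intro x hx
    obtain ⟨c, rfl⟩ := Ideal.mem_span_singleton'.mp hx
    rw [map_mul, show φ a = a from a.2]
    exact Ideal.mul_mem_left _ _ (Ideal.mem_span_singleton_self _)
  obtain ⟨b, hb⟩ : IsUnit (a : K) := by
    rcases hφ.2 _ hstable with h | h
    · exact absurd (Subtype.ext (Ideal.span_singleton_eq_bot.mp h)) ha
    · exact Ideal.span_singleton_eq_top.mp h
  have hab : (a : K) * ↑b⁻¹ = 1 := by rw [← hb, Units.mul_inv]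
  exact ⟨⟨↑b⁻¹, map_eq_self_of_mul_eq_one a.2 hab⟩, Subtype.ext hab⟩

section ConstantRelations

variable {R C ι : Type*} [CommRing R] [CommRing C] (l : R →+* C) (b : ι → C)

def relationCoeffIdeal (s : Finset ι) (i₀ : ι) : Ideal R where
  carrier := {r | ∃ c : ι → R, c i₀ = r ∧ ∑ i ∈ s, l (c i) * b i = 0}
  add_mem' := by
    rintro _ _ ⟨c, rfl, hc⟩ ⟨d, rfl, hd⟩
    refine ⟨c + d, rfl, ?_⟩
    simp only [Pi.add_apply, map_add, add_mul, Finset.sum_add_distrib, hc, hd, add_zero]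
  zero_mem' := ⟨0, rfl, by simp⟩
  smul_mem' := by
    rintro a _ ⟨c, rfl, hc⟩
    refine ⟨a • c, rfl, ?_⟩
    simp only [Pi.smul_apply, smul_eq_mul, map_mul, mul_assoc, ← Finset.mul_sum, hc, mul_zero]

variable {l b} {Φ : R →+* R} {ΦC : C →+* C}

theorem sum_map_mul_eq_zero (hl : ∀ r, ΦC (l r) = l (Φ r)) (hb : ∀ i, ΦC (b i) = b i)
    {s : Finset ι} {c : ι → R} (hc : ∑ i ∈ s, l (c i) * b i = 0) :
    ∑ i ∈ s, l (Φ (c i)) * b i = 0 := by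
  simpa [map_sum, hl, hb] using congrArg ΦC hc

theorem eq_zero_of_sum_mul_eq_zero (hΦ : DiffSimple Φ) (hl : ∀ r, ΦC (l r) = l (Φ r))
    (hb : ∀ i, ΦC (b i) = b i)
    (hconst : ∀ (s : Finset ι) (c : ι → R), (∀ i ∈ s, Φ (c i) = c i) →
      ∑ i ∈ s, l (c i) * b i = 0 → ∀ i ∈ s, c i = 0)
    (s : Finset ι) (c : ι → R) (hc : ∑ i ∈ s, l (c i) * b i = 0) : ∀ i ∈ s, c i = 0 := by
  classical
  induction s using Finset.strongInduction generalizing c with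
  | H s ih =>
  intro i₀ hi₀
  by_contra hne
  obtain ⟨c', hc'₀, hc'⟩ : (1 : R) ∈ relationCoeffIdeal l b s i₀ := by
    have hstable : ∀ r ∈ relationCoeffIdeal l b s i₀, Φ r ∈ relationCoeffIdeal l b s i₀ := by
      rintro _ ⟨d, rfl, hd⟩
      exact ⟨fun i => Φ (d i), rfl, sum_map_mul_eq_zero hl hb hd⟩
    rcases hΦ.2 _ hstable with h | h
    · exact absurd (Ideal.mem_bot.mp (h ▸ ⟨c, rfl, hc⟩)) hne
    · exact h ▸ Submodule.mem_top
  -- `Φ c' - c'` is a relation vanishing at `i₀`, so it lives on a smaller support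
  have hfix : ∀ i ∈ s, Φ (c' i) = c' i := by
    have hrel : ∑ i ∈ s.erase i₀, l (Φ (c' i) - c' i) * b i = 0 := by
      rw [Finset.sum_erase _ (by rw [hc'₀, map_one, sub_self, map_zero, zero_mul])]
      simp only [map_sub, sub_mul, Finset.sum_sub_distrib, sum_map_mul_eq_zero hl hb hc', hc',
        sub_zero]
    intro i hi
    by_cases h : i = i₀
    · rw [h, hc'₀, map_one]
    · exact sub_eq_zero.mp
        (ih _ (Finset.erase_ssubset hi₀) _ hrel i (Finset.mem_erase.mpr ⟨h, hi⟩))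
  have := hΦ.nontrivial
  exact one_ne_zero (hc'₀ ▸ hconst s c' hfix hc' i₀ hi₀)

end ConstantRelations

theorem Algebra.TensorProduct.lift_injective_of_basis {k A B C ι : Type*} [CommRing k]
    [CommRing A] [Ring B] [Ring C] [Algebra k A] [Algebra k B] [Algebra k C]
    (f : A →ₐ[k] C) (g : B →ₐ[k] C) (hfg : ∀ x y, Commute (f x) (g y))
    (bas : Module.Basis ι k B)
    (h : ∀ (s : Finset ι) (c : ι → A), ∑ i ∈ s, f (c i) * g (bas i) = 0 → ∀ i ∈ s, c i = 0) :
    Function.Injective (lift f g hfg) := by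
  rw [injective_iff_map_eq_zero]
  intro x hx
  let b := bas.baseChange A
  have hcoeff := h (b.repr x).support (b.repr x) <| by
    rw [← hx]
    conv_rhs => rw [← b.linearCombination_repr x]
    simp [b, Finsupp.linearCombination_apply, Finsupp.sum, TensorProduct.smul_tmul']
  have : b.repr x = 0 := Finsupp.support_eq_empty.mp <|
    Finset.eq_empty_of_forall_notMem fun i hi => Finsupp.mem_support_iff.mp hi (hcoeff i hi)
  simpa using this

theorem eq_zero_of_sum_algebraMap_mul_eq_zero {k A B C ι : Type*} [CommRing k] [Ring A] [Ring B]
    [Ring C] [Algebra k A] [Algebra k B] [Algebra k C] (f : A →ₐ[k] C) {g : B →ₐ[k] C}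
    (hg : Function.Injective g) {b : ι → B} (hb : LinearIndependent k b) (s : Finset ι)
    (c : ι → A) (hc : ∀ i ∈ s, c i ∈ Set.range (algebraMap k A))
    (hsum : ∑ i ∈ s, f (c i) * g (b i) = 0) : ∀ i ∈ s, c i = 0 := by
  choose! d hd using hc
  have hdsum : g (∑ i ∈ s, d i • b i) = 0 := by
    rw [← hsum, map_sum]
    refine Finset.sum_congr rfl fun i hi => ?_
    rw [map_smul, ← hd i hi, AlgHom.commutes, Algebra.smul_def]
  intro i hi
  rw [← hd i hi, linearIndependent_iff'.mp hb s d (hg (hdsum.trans (map_zero g).symm)) i hi,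
    map_zero]

section FundamentalMatrix

open Algebra.TensorProduct

variable {n : Type*} [Fintype n]

theorem map_map_eq_mul_of_comp_eq {S T : Type*} [CommRing S] [CommRing T] {Φ : S →+* S}
    {Ψ : T →+* T} {ψ : S →+* T} (hψ : Ψ.comp ψ = ψ.comp Φ) {B Y : Matrix n n S}
    (hY : Y.map Φ = B * Y) : (Y.map ψ).map Ψ = B.map ψ * Y.map ψ := by
  rw [Matrix.map_map, ← RingHom.coe_comp, hψ, RingHom.coe_comp, ← Matrix.map_map, hY,
    Matrix.map_mul]

variable {K R : Type*} [CommRing K] [CommRing R] [Algebra K R]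

theorem map_iterate_eq_mul {σ : K →+* K} {Φ σ' : R →+* R} (hcomm : ∀ x, Φ (σ' x) = σ' (Φ x))
    (hσ : ∀ a, σ' (algebraMap K R a) = algebraMap K R (σ a)) {A : Matrix n n K}
    {Y : Matrix n n R} (hY : Y.map Φ = A.map (algebraMap K R) * Y) (i : ℕ) :
    (Y.map σ'^[i]).map Φ = (A.map σ^[i]).map (algebraMap K R) * Y.map σ'^[i] := by
  have hcomm_i : (⇑σ')^[i] ∘ Φ = Φ ∘ (⇑σ')^[i] :=
    funext ((Function.Commute.iterate_right hcomm i).symm)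
  have hσ_i : (⇑σ')^[i] ∘ algebraMap K R = algebraMap K R ∘ σ^[i] :=
    funext fun a => (Function.Semiconj.iterate_right (fun a => (hσ a).symm) i a).symm
  rw [Matrix.map_map, ← hcomm_i, ← Matrix.map_map, hY, ← RingHom.coe_pow, Matrix.map_mul,
    Matrix.map_map, RingHom.coe_pow, hσ_i, ← Matrix.map_map]

variable {Φ : R →+* R} {ΦC : R ⊗[K] R →+* R ⊗[K] R}

variable (ΦC) in
theorem tmul_one_mem_includeLeftRingHom_range_sup (r : R) :
    r ⊗ₜ[K] (1 : R) ∈ (includeLeftRingHom : R →+* R ⊗[K] R).range ⊔ constSubring ΦC :=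
  (le_sup_left : (includeLeftRingHom : R →+* R ⊗[K] R).range ≤ _) (RingHom.mem_range_self _ r)

theorem exists_const_matrix_of_fundamental [DecidableEq n]
    (hΦC : ∀ r s : R, ΦC (r ⊗ₜ[K] s) = Φ r ⊗ₜ[K] Φ s) {B : Matrix n n K} {Y : Matrix n n R}
    (hY : Y.map Φ = B.map (algebraMap K R) * Y) (hdet : IsUnit Y.det) :
    ∃ Z : Matrix n n (R ⊗[K] R), Z.map ΦC = Z ∧
      Y.map (includeRight : R →ₐ[K] R ⊗[K] R) =
        Y.map (includeLeftRingHom : R →+* R ⊗[K] R) * Z := by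
  set L := Y.map (includeLeftRingHom : R →+* R ⊗[K] R)
  have hL : IsUnit L.det := by
    simpa [L, RingHom.map_det] using hdet.map (includeLeftRingHom : R →+* R ⊗[K] R)
  have hB : (B.map (algebraMap K R)).map (includeRight : R →ₐ[K] R ⊗[K] R) =
      (B.map (algebraMap K R)).map (includeLeftRingHom : R →+* R ⊗[K] R) := by
    simp only [Matrix.map_map]
    congr 1
    ext a
    simp [Algebra.algebraMap_eq_smul_one, TensorProduct.smul_tmul']
  have hΦL := map_map_eq_mul_of_comp_eq (Ψ := ΦC) (ψ := includeLeftRingHom)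
    (RingHom.ext fun r => by simp [hΦC]) hY
  have hΦR := map_map_eq_mul_of_comp_eq (Ψ := ΦC) (ψ := includeRight.toRingHom)
    (RingHom.ext fun r => by simp [hΦC]) hY
  set B' := (B.map (algebraMap K R)).map (includeLeftRingHom : R →+* R ⊗[K] R)
  set Rt := Y.map (includeRight : R →ₐ[K] R ⊗[K] R)
  refine ⟨L⁻¹ * Rt, ?_, (Matrix.mul_nonsing_inv_cancel_left _ _ hL).symm⟩
  calc (L⁻¹ * Rt).map ΦC
      = L⁻¹.map ΦC * (B' * Rt) := by
        rw [Matrix.map_mul, ← hB]; exact congrArg (L⁻¹.map ΦC * ·) hΦR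
    _ = L⁻¹.map ΦC * L.map ΦC * (L⁻¹ * Rt) := by
      rw [hΦL, mul_assoc, mul_assoc, Matrix.mul_nonsing_inv_cancel_left _ _ hL]
    _ = L⁻¹ * Rt := by
      rw [← Matrix.map_mul, Matrix.nonsing_inv_mul _ hL,
        Matrix.map_one _ (map_zero _) (map_one _), one_mul]

theorem tmul_mem_sup_of_fundamental [DecidableEq n]
    (hΦC : ∀ r s : R, ΦC (r ⊗ₜ[K] s) = Φ r ⊗ₜ[K] Φ s) {B : Matrix n n K} {Y : Matrix n n R}
    (hY : Y.map Φ = B.map (algebraMap K R) * Y) {w : R} (hw : Y.det * w = 1) :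
    (∀ p q,
      (1 : R) ⊗ₜ[K] Y p q ∈ (includeLeftRingHom : R →+* R ⊗[K] R).range ⊔ constSubring ΦC) ∧
      (1 : R) ⊗ₜ[K] w ∈ (includeLeftRingHom : R →+* R ⊗[K] R).range ⊔ constSubring ΦC := by
  obtain ⟨Z, hZ, hYZ⟩ := exists_const_matrix_of_fundamental hΦC hY (IsUnit.of_mul_eq_one _ hw)
  set S := (includeLeftRingHom : R →+* R ⊗[K] R).range ⊔ constSubring ΦC
  have hH {x} (hx : ΦC x = x) : x ∈ S := (le_sup_right : constSubring ΦC ≤ S) hx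
  constructor
  · intro p q
    have hpq := congrFun (congrFun hYZ p) q
    simp only [Matrix.map_apply, includeRight_apply, Matrix.mul_apply] at hpq
    rw [hpq]
    exact Subring.sum_mem _ fun j _ =>
      Subring.mul_mem _ (tmul_one_mem_includeLeftRingHom_range_sup ΦC _)
        (hH (by simpa using congrFun (congrFun hZ j) q))
  · have hZdet : ΦC Z.det = Z.det := by rw [RingHom.map_det]; exact congrArg Matrix.det hZ
    have hYdet : (1 : R) ⊗ₜ[K] Y.det = (Y.det ⊗ₜ[K] (1 : R)) * Z.det := by
      have := congrArg Matrix.det hYZ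
      rwa [Matrix.det_mul, ← RingHom.mapMatrix_apply, ← RingHom.map_det, ← AlgHom.mapMatrix_apply,
        ← AlgHom.map_det] at this
    set u := (Y.det ⊗ₜ[K] (1 : R)) * ((1 : R) ⊗ₜ[K] w)
    have hu : Z.det * u = 1 := by
      rw [← mul_assoc, mul_comm Z.det, ← hYdet, tmul_mul_tmul, one_mul, hw, one_def]
    have hwu : (1 : R) ⊗ₜ[K] w = (w ⊗ₜ[K] (1 : R)) * u := by
      rw [← mul_assoc, tmul_mul_tmul, mul_comm w, hw, one_mul, ← one_def, one_mul]
    rw [hwu]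
    exact Subring.mul_mem _ (tmul_one_mem_includeLeftRingHom_range_sup ΦC w)
      (hH (map_eq_self_of_mul_eq_one hZdet hu))

theorem includeLeftRingHom_range_sup_constSubring_eq_top {m : ℕ} {σ : K →+* K} {σ' : R →+* R}
    (hcommR : ∀ x : R, Φ (σ' x) = σ' (Φ x))
    (hσ : ∀ a : K, σ' (algebraMap K R a) = algebraMap K R (σ a))
    {A : Matrix (Fin m) (Fin m) K} {Y : Matrix (Fin m) (Fin m) R} {w : ℕ → R}
    (hY : Y.map Φ = A.map (algebraMap K R) * Y)
    (hw : ∀ i : ℕ, (Y.map (σ'^[i])).det * w i = 1)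
    (hgen : Algebra.adjoin K
      ({x : R | ∃ (i : ℕ) (p q : Fin m), (Y.map (σ'^[i])) p q = x} ∪ Set.range w) = ⊤)
    (hΦC : ∀ r s : R, ΦC (r ⊗ₜ[K] s) = Φ r ⊗ₜ[K] Φ s) :
    (includeLeftRingHom : R →+* R ⊗[K] R).range ⊔ constSubring ΦC = ⊤ := by
  set S := (includeLeftRingHom : R →+* R ⊗[K] R).range ⊔ constSubring ΦC
  let T : Subalgebra K R :=
    { (S.comap (includeRight : R →ₐ[K] R ⊗[K] R).toRingHom).toSubsemiring with
      algebraMap_mem' := fun a => by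
        have : (1 : R) ⊗ₜ[K] algebraMap K R a = algebraMap K R a ⊗ₜ[K] (1 : R) := by
          simp [Algebra.algebraMap_eq_smul_one, TensorProduct.smul_tmul']
        change (1 : R) ⊗ₜ[K] algebraMap K R a ∈ S
        exact this ▸ tmul_one_mem_includeLeftRingHom_range_sup ΦC _ }
  have hT : ⊤ ≤ T := hgen ▸ Algebra.adjoin_le (by
    rintro _ (⟨i, p, q, rfl⟩ | ⟨i, rfl⟩)
    · exact (tmul_mem_sup_of_fundamental hΦC (map_iterate_eq_mul hcommR hσ hY i) (hw i)).1 p q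
    · exact (tmul_mem_sup_of_fundamental hΦC (map_iterate_eq_mul hcommR hσ hY i) (hw i)).2)
  rw [eq_top_iff]
  rintro x -
  induction x using TensorProduct.induction_on with
  | zero => exact zero_mem S
  | tmul r s =>
    rw [show r ⊗ₜ[K] s = r ⊗ₜ[K] (1 : R) * (1 : R) ⊗ₜ[K] s by simp]
    exact mul_mem (tmul_one_mem_includeLeftRingHom_range_sup ΦC r) (hT trivial)
  | add x y hx hy => exact add_mem hx hy

end FundamentalMatrix

theorem torsor_mu_bijective_general
    {K R : Type*} [CommRing K] [CommRing R] [Algebra K R] {n : ℕ}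
    (φ σ : K →+* K)
    (hPF : PseudoField K φ)
    (A : Matrix (Fin n) (Fin n) K)
    (Φ σ' : R →+* R) (hcommR : ∀ x : R, Φ (σ' x) = σ' (Φ x))
    (hΦ : ∀ a : K, Φ (algebraMap K R a) = algebraMap K R (φ a))
    (hσ : ∀ a : K, σ' (algebraMap K R a) = algebraMap K R (σ a))
    (hsimple : DiffSimple Φ)
    (Y : Matrix (Fin n) (Fin n) R) (w : ℕ → R)
    (hY : Y.map ⇑Φ = A.map ⇑(algebraMap K R) * Y)
    (hw : ∀ i : ℕ, (Y.map ((⇑σ')^[i])).det * w i = 1)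
    (hgen : Algebra.adjoin K
      ({x : R | ∃ (i : ℕ) (p q : Fin n), (Y.map ((⇑σ')^[i])) p q = x} ∪ Set.range w) = ⊤)
    -- `R^Φ` equals the image of `k = K^φ`
    (hconst : ∀ r : R, Φ r = r ↔ ∃ a : K, φ a = a ∧ algebraMap K R a = r)
    -- `Φ ⊗ Φ` on `C = R ⊗_K R`
    (ΦC : (R ⊗[K] R) →+* (R ⊗[K] R))
    (hΦC : ∀ r s : R, ΦC (r ⊗ₜ[K] s) = Φ r ⊗ₜ[K] Φ s) :
    letI : Algebra ↥(constSubring φ) R :=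
      ((algebraMap K R).comp (constSubring φ).subtype).toAlgebra
    letI : Algebra ↥(constSubring φ) ↥(constSubring ΦC) := (kToH φ Φ hΦ ΦC hΦC).toAlgebra
    ∃ μ : (R ⊗[↥(constSubring φ)] ↥(constSubring ΦC)) →+* (R ⊗[K] R),
      (∀ (r : R) (h : ↥(constSubring ΦC)),
        μ (r ⊗ₜ h) = (r ⊗ₜ[K] (1 : R)) * (↑h : R ⊗[K] R)) ∧
      Function.Bijective μ := by
  let : Algebra (constSubring φ) R := ((algebraMap K R).comp (constSubring φ).subtype).toAlgebra
  let : Algebra (constSubring φ) (constSubring ΦC) := (kToH φ Φ hΦ ΦC hΦC).toAlgebra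
  let iC : Algebra (constSubring φ) (R ⊗[K] R) :=
    ((constSubring ΦC).subtype.comp (kToH φ Φ hΦ ΦC hΦC)).toAlgebra
  have : @IsScalarTower (constSubring φ) (constSubring φ) (R ⊗[K] R)
      Algebra.toSMul (@Algebra.toSMul _ _ _ _ iC) (@Algebra.toSMul _ _ _ _ iC) :=
    @IsScalarTower.of_algebraMap_eq' _ _ _ _ _ _ _ iC iC rfl
  have : Module.Free (constSubring φ) (constSubring ΦC) :=
    let := (isField_constSubring hPF.1).toField
    inferInstance
  let f : R →ₐ[constSubring φ] R ⊗[K] R :=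
    { Algebra.TensorProduct.includeLeftRingHom with commutes' := fun _ => rfl }
  let g : constSubring ΦC →ₐ[constSubring φ] R ⊗[K] R :=
    { (constSubring ΦC).subtype with commutes' := fun _ => rfl }
  have hfg : ∀ x y, Commute (f x) (g y) := fun _ _ => .all _ _
  have hμ (r : R) (h : constSubring ΦC) :
      Algebra.TensorProduct.lift f g hfg (r ⊗ₜ h) = r ⊗ₜ[K] (1 : R) * h :=
    Algebra.TensorProduct.lift_tmul f g hfg r h
  refine ⟨(Algebra.TensorProduct.lift f g hfg).toRingHom, hμ, ?_, ?_⟩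
  · let bas := Module.Free.chooseBasis (constSubring φ) (constSubring ΦC)
    refine Algebra.TensorProduct.lift_injective_of_basis f g hfg bas <|
      eq_zero_of_sum_mul_eq_zero hsimple (fun r => by simp [f, hΦC]) (fun i => (bas i).2)
        fun s c hc => eq_zero_of_sum_algebraMap_mul_eq_zero f Subtype.val_injective
          bas.linearIndependent s c fun i hi => ?_
    obtain ⟨a, ha, hac⟩ := (hconst _).mp (hc i hi)
    exact ⟨⟨a, ha⟩, hac⟩
  · rw [← RingHom.range_eq_top, eq_top_iff,
      ← includeLeftRingHom_range_sup_constSubring_eq_top hcommR hσ hY hw hgen hΦC]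
    exact sup_le (fun _ ⟨r, hr⟩ => ⟨r ⊗ₜ 1, (hμ r 1).trans ((mul_one _).trans hr)⟩)
      (fun h hh => ⟨1 ⊗ₜ ⟨h, hh⟩, (hμ 1 ⟨h, hh⟩).trans (one_mul h)⟩)

/-- The torsor lemma: if `R` is a `σ`-PV ring over `K` with `R^Φ = K^φ = k`, then the
multiplication map `μ : R ⊗_k H → R ⊗_K R`, `r ⊗ h ↦ (r ⊗ 1) · h`, where
`H = (R ⊗_K R)^{Φ ⊗ Φ}`, is bijective. -/
theorem torsor_mu_bijective
    {K R : Type*} [CommRing K] [CommRing R] [Algebra K R] {n : ℕ}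
    (φ σ : K →+* K) (hcomm : ∀ a : K, φ (σ a) = σ (φ a))
    (hPF : PseudoField K φ)
    (A : Matrix (Fin n) (Fin n) K) (hA : IsUnit A.det)
    (Φ σ' : R →+* R) (hcommR : ∀ x : R, Φ (σ' x) = σ' (Φ x))
    (hΦ : ∀ a : K, Φ (algebraMap K R a) = algebraMap K R (φ a))
    (hσ : ∀ a : K, σ' (algebraMap K R a) = algebraMap K R (σ a))
    (hsimple : DiffSimple Φ) (hdom : PseudoDomain Φ)
    (Y : Matrix (Fin n) (Fin n) R) (w : ℕ → R)
    (hY : Y.map ⇑Φ = A.map ⇑(algebraMap K R) * Y)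
    (hw : ∀ i : ℕ, (Y.map ((⇑σ')^[i])).det * w i = 1)
    (hgen : Algebra.adjoin K
      ({x : R | ∃ (i : ℕ) (p q : Fin n), (Y.map ((⇑σ')^[i])) p q = x} ∪ Set.range w) = ⊤)
    -- `R^Φ` equals the image of `k = K^φ`
    (hconst : ∀ r : R, Φ r = r ↔ ∃ a : K, φ a = a ∧ algebraMap K R a = r)
    -- `Φ ⊗ Φ` on `C = R ⊗_K R`
    (ΦC : (R ⊗[K] R) →+* (R ⊗[K] R))
    (hΦC : ∀ r s : R, ΦC (r ⊗ₜ[K] s) = Φ r ⊗ₜ[K] Φ s) :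
    letI : Algebra ↥(constSubring φ) R :=
      ((algebraMap K R).comp (constSubring φ).subtype).toAlgebra
    letI : Algebra ↥(constSubring φ) ↥(constSubring ΦC) := (kToH φ Φ hΦ ΦC hΦC).toAlgebra
    ∃ μ : (R ⊗[↥(constSubring φ)] ↥(constSubring ΦC)) →+* (R ⊗[K] R),
      (∀ (r : R) (h : ↥(constSubring ΦC)),
        μ (r ⊗ₜ h) = (r ⊗ₜ[K] (1 : R)) * (↑h : R ⊗[K] R)) ∧
      Function.Bijective μ :=
  torsor_mu_bijective_general φ σ hPF A Φ σ' hcommR hΦ hσ hsimple Y w hY hw hgen hconst ΦC hΦC
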